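/- Let (X,f) be a TDS and φ, ψ ∈ C(X,ℝ) with ψ > 0. Suppose P(φ − βψ) ∈ ℝ for every β ∈ ℝ. Then P(φ − P_ψ(φ)·ψ) = 0, i.e., P_ψ(φ) is the unique root of the (strictly decreasing, continuous) function β ↦ P(φ − βψ). -/

import Mathlib

open MeasureTheory Filter Topology Set

variable {X : Type*}

/-- Birkhoff sum `S_n φ (x) = ∑_{i<n} φ(f^i x)`. -/
noncomputable def birkhoff (f : X → X) (φ : X → ℝ) (n : ℕ) (x : X) : ℝ :=
  ∑ i ∈ Finset.range n, φ (f^[i] x)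

/-- The `n`-th Bowen metric. -/
noncomputable def dynDist [MetricSpace X] (f : X → X) (n : ℕ) (x y : X) : ℝ :=
  ⨆ i : Fin n, dist (f^[(i : ℕ)] x) (f^[(i : ℕ)] y)

/-- `F` is an `(n,ε)`-spanning set of `Z`. -/
def IsSpanningSet [MetricSpace X] (f : X → X) (n : ℕ) (ε : ℝ) (Z : Set X) (F : Finset X) : Prop :=
  ∀ y ∈ Z, ∃ x ∈ F, dynDist f n x y ≤ ε

/-- `E` is `(n,ε)`-separated. -/
def IsSeparatedSet [MetricSpace X] (f : X → X) (n : ℕ) (ε : ℝ) (E : Finset X) : Prop :=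
  ∀ x ∈ E, ∀ y ∈ E, x ≠ y → ε < dynDist f n x y

/-- `S_T = {n : ∃ x, S_n ψ(x) ≤ T < S_{n+1} ψ(x)}`. -/
def STset (f : X → X) (ψ : X → ℝ) (T : ℝ) : Set ℕ :=
  {n | ∃ x : X, birkhoff f ψ n x ≤ T ∧ T < birkhoff f ψ (n + 1) x}

/-- `X_n = {x : S_n ψ(x) ≤ T < S_{n+1} ψ(x)}`. -/
def Xset (f : X → X) (ψ : X → ℝ) (T : ℝ) (n : ℕ) : Set X :=
  {x | birkhoff f ψ n x ≤ T ∧ T < birkhoff f ψ (n + 1) x}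

/-- `Q_{ψ,T}(f,φ,ε)`, the spanning-set quantity. -/
noncomputable def Qspan [MetricSpace X] (f : X → X) (φ ψ : X → ℝ) (T ε : ℝ) : ℝ :=
  sInf { r : ℝ | ∃ F : ℕ → Finset X,
    (∀ n ∈ STset f ψ T, IsSpanningSet f n ε (Xset f ψ T n) (F n)) ∧
    r = ∑' n : ℕ, Set.indicator (STset f ψ T)
        (fun n => ∑ x ∈ F n, Real.exp (birkhoff f φ n x)) n }

/-- `P_{ψ,T}(f,φ,ε)`, the separated-set quantity. -/
noncomputable def Psep [MetricSpace X] (f : X → X) (φ ψ : X → ℝ) (T ε : ℝ) : ℝ :=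
  sSup { r : ℝ | ∃ E : ℕ → Finset X,
    (∀ n ∈ STset f ψ T, (E n : Set X) ⊆ Xset f ψ T n ∧ IsSeparatedSet f n ε (E n)) ∧
    r = ∑' n : ℕ, Set.indicator (STset f ψ T)
        (fun n => ∑ x ∈ E n, Real.exp (birkhoff f φ n x)) n }

/-- The `ψ`-induced topological pressure of `φ`. -/
noncomputable def inducedPressure [MetricSpace X] (f : X → X) (φ ψ : X → ℝ) : EReal :=
  ⨆ (ε : ℝ) (_ : 0 < ε),
    Filter.limsup (fun T : ℝ => ((T⁻¹ * Real.log (Qspan f φ ψ T ε) : ℝ) : EReal)) atTop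

/-- Largest sum over `(n,ε)`-separated sets of `X`. -/
noncomputable def sepSum [MetricSpace X] (f : X → X) (φ : X → ℝ) (n : ℕ) (ε : ℝ) : ℝ :=
  sSup { r : ℝ | ∃ E : Finset X, IsSeparatedSet f n ε E ∧
    r = ∑ x ∈ E, Real.exp (birkhoff f φ n x) }

/-- The classical (Walters) topological pressure. -/
noncomputable def topPressure [MetricSpace X] (f : X → X) (φ : X → ℝ) : EReal :=
  ⨆ (ε : ℝ) (_ : 0 < ε),
    Filter.limsup (fun n : ℕ => (((n : ℝ)⁻¹ * Real.log (sepSum f φ n ε) : ℝ) : EReal)) atTop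

/-!
Let `g β = P(φ - βψ)` and `0 < m ≤ ψ ≤ M`. Comparing potentials gives
`g β - (β' - β) M ≤ g β' ≤ g β - (β' - β) m` for `β ≤ β'`, so `g` is a strictly decreasing
Lipschitz bijection of `ℝ` with a unique root `c`, and it remains to show `P_ψ(φ) = c`.

On `X_n(T) = {S_n ψ ≤ T < S_{n+1} ψ}` the sums `S_n φ` and `S_n (φ - βψ) + βT` differ by at most
`|β| M`, and `n ≍ T` for `n ∈ S_T`. If `g β < 0`, the separated sums of `φ - βψ` decay
exponentially in `n`, hence in `T`, and this beats the `O(T)` many `n ∈ S_T`: eventually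
`Q_T ≤ exp (βT)`, so `P_ψ(φ) ≤ β`. If `g β > 0`, there are `(n, ε₁)`-separated sets with sums
above `exp (nq)`; pigeonholing them onto the `O(n)` levels `T ∈ mℕ` and shadowing them by
`(n, ε)`-spanning sets of `X_n(T)`, `2ε ≤ ε₁`, gives `Q_T ≥ exp (βT)` for arbitrarily large `T`, so
`β ≤ P_ψ(φ)`.
-/

open Finset Real

section Birkhoff

variable {f : X → X} {φ ψ : X → ℝ} {n : ℕ} {x : X}

lemma birkhoff_zero (f : X → X) (φ : X → ℝ) (x : X) : birkhoff f φ 0 x = 0 := by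
  simp [birkhoff]

lemma birkhoff_succ (f : X → X) (φ : X → ℝ) (n : ℕ) (x : X) :
    birkhoff f φ (n + 1) x = birkhoff f φ n x + φ (f^[n] x) :=
  sum_range_succ _ _

lemma birkhoff_le_mul {B : ℝ} (h : ∀ x, φ x ≤ B) (n : ℕ) (x : X) : birkhoff f φ n x ≤ n * B := by
  simpa [birkhoff] using sum_le_sum fun i (_ : i ∈ Finset.range n) => h (f^[i] x)

lemma mul_le_birkhoff {b : ℝ} (h : ∀ x, b ≤ φ x) (n : ℕ) (x : X) : n * b ≤ birkhoff f φ n x := by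
  simpa [birkhoff] using sum_le_sum fun i (_ : i ∈ Finset.range n) => h (f^[i] x)

lemma birkhoff_le_birkhoff_add {φ₁ φ₂ : X → ℝ} {y : X} {c : ℝ}
    (h : ∀ i < n, φ₁ (f^[i] x) ≤ φ₂ (f^[i] y) + c) :
    birkhoff f φ₁ n x ≤ birkhoff f φ₂ n y + n * c := by
  calc birkhoff f φ₁ n x ≤ ∑ i ∈ range n, (φ₂ (f^[i] y) + c) :=
        sum_le_sum fun i hi => h i (mem_range.1 hi)
    _ = birkhoff f φ₂ n y + n * c := by simp [birkhoff, sum_add_distrib]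

lemma birkhoff_sub_mul (f : X → X) (φ ψ : X → ℝ) (β : ℝ) (n : ℕ) (x : X) :
    birkhoff f (fun y => φ y - β * ψ y) n x = birkhoff f φ n x - β * birkhoff f ψ n x := by
  simp [birkhoff, sum_sub_distrib, mul_sum]

variable {T M : ℝ}

lemma abs_birkhoff_sub_le_of_mem_Xset (hM : ∀ x, ψ x ≤ M) (hx : x ∈ Xset f ψ T n) :
    |birkhoff f ψ n x - T| ≤ M := by
  have := birkhoff_succ f ψ n x ▸ hx.2
  have := hM (f^[n] x)
  exact abs_le.2 ⟨by linarith, by linarith [hx.1]⟩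

lemma abs_birkhoff_sub_birkhoff_sub_mul_le (φ : X → ℝ) (β : ℝ) (hM : ∀ x, ψ x ≤ M)
    (hx : x ∈ Xset f ψ T n) :
    |birkhoff f φ n x - (birkhoff f (fun y => φ y - β * ψ y) n x + β * T)| ≤ |β| * M := by
  rw [birkhoff_sub_mul, show ∀ a b c : ℝ, a - (a - b + c) = b - c by intros; ring, ← mul_sub,
    abs_mul]
  exact mul_le_mul_of_nonneg_left (abs_birkhoff_sub_le_of_mem_Xset hM hx) (abs_nonneg β)

end Birkhoff

section Bowen

variable [MetricSpace X] {f : X → X} {n : ℕ} {ε : ℝ}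

lemma dynDist_nonneg (f : X → X) (n : ℕ) (x y : X) : 0 ≤ dynDist f n x y :=
  Real.iSup_nonneg fun _ => dist_nonneg

lemma dist_iterate_le_dynDist {i : ℕ} (hi : i < n) (x y : X) :
    dist (f^[i] x) (f^[i] y) ≤ dynDist f n x y :=
  le_ciSup (f := fun j : Fin n => dist (f^[(j : ℕ)] x) (f^[(j : ℕ)] y))
    (finite_range _).bddAbove ⟨i, hi⟩

lemma dynDist_le {x y : X} (hε : 0 ≤ ε) (h : ∀ i < n, dist (f^[i] x) (f^[i] y) ≤ ε) :
    dynDist f n x y ≤ ε :=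
  Real.iSup_le (fun i => h i i.2) hε

lemma dynDist_comm (f : X → X) (n : ℕ) (x y : X) : dynDist f n x y = dynDist f n y x := by
  simp only [dynDist, dist_comm]

lemma dynDist_self (f : X → X) (n : ℕ) (x : X) : dynDist f n x x = 0 :=
  le_antisymm (dynDist_le le_rfl fun _ _ => (dist_self _).le) (dynDist_nonneg f n x x)

lemma dynDist_triangle (f : X → X) (n : ℕ) (x y z : X) :
    dynDist f n x z ≤ dynDist f n x y + dynDist f n y z :=
  dynDist_le (add_nonneg (dynDist_nonneg f n x y) (dynDist_nonneg f n y z)) fun _ hi =>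
    (dist_triangle _ _ _).trans
      (add_le_add (dist_iterate_le_dynDist hi x y) (dist_iterate_le_dynDist hi y z))

lemma IsSeparatedSet.mono {E E' : Finset X} (hE : IsSeparatedSet f n ε E) (h : E' ⊆ E) :
    IsSeparatedSet f n ε E' :=
  fun x hx y hy => hE x (h hx) y (h hy)

lemma IsSeparatedSet.insert [DecidableEq X] {E : Finset X} {y : X} (hE : IsSeparatedSet f n ε E)
    (hy : ∀ x ∈ E, ε < dynDist f n x y) : IsSeparatedSet f n ε (insert y E) := by
  intro a ha b hb hab
  rcases mem_insert.1 ha with rfl | haE <;> rcases mem_insert.1 hb with rfl | hbE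
  · exact absurd rfl hab
  · exact dynDist_comm f n a b ▸ hy b hbE
  · exact hy a haE
  · exact hE a haE b hbE hab

/-- Two points of an `ε`-separated set cannot be `δ`-close to the same point when `2δ ≤ ε`. -/
lemma IsSeparatedSet.exists_injOn {E F : Finset X} {Z : Set X} {δ : ℝ}
    (hE : IsSeparatedSet f n ε E) (hEZ : ↑E ⊆ Z) (hF : IsSpanningSet f n δ Z F) (hδ : 2 * δ ≤ ε) :
    ∃ σ : X → X, (∀ x ∈ E, σ x ∈ F ∧ dynDist f n (σ x) x ≤ δ) ∧ Set.InjOn σ E := by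
  choose! σ hσF hσ using fun x (hx : x ∈ E) => hF x (hEZ hx)
  refine ⟨σ, fun x hx => ⟨hσF x hx, hσ x hx⟩, fun x hx y hy hxy => by_contra fun hne => ?_⟩
  have := hE x hx y hy hne
  have : dynDist f n x y ≤ δ + δ :=
    (dynDist_triangle f n x (σ x) y).trans
      (add_le_add (dynDist_comm f n x _ ▸ hσ x hx) (hxy ▸ hσ y hy))
  linarith

lemma IsSeparatedSet.card_le {E F : Finset X} (hE : IsSeparatedSet f n ε E)
    (hF : IsSpanningSet f n (ε / 2) univ F) : #E ≤ #F := by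
  obtain ⟨σ, hσ, hinj⟩ := hE.exists_injOn (subset_univ _) hF (by linarith)
  exact card_le_card_of_injOn σ (fun x hx => (hσ x hx).1) hinj

end Bowen

section Compact

variable [MetricSpace X] [CompactSpace X] {f : X → X} {n : ℕ} {ε : ℝ}

lemma exists_isSpanningSet_univ (hf : Continuous f) (n : ℕ) (hε : 0 < ε) :
    ∃ F : Finset X, IsSpanningSet f n ε univ F := by
  obtain ⟨F, -, hF⟩ := isCompact_univ.elim_nhds_subcover
    (fun x => {y | ∀ i ∈ Finset.range n, dist (f^[i] y) (f^[i] x) < ε}) fun x _ =>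
      (eventually_all_finset _).2 fun i _ =>
        (hf.iterate i).continuousAt.eventually (Metric.ball_mem_nhds _ hε)
  refine ⟨F, fun y _ => ?_⟩
  obtain ⟨x, hx, hxy⟩ := mem_iUnion₂.1 (hF (mem_univ y))
  exact ⟨x, hx, dynDist_le hε.le fun i hi => (dist_comm (f^[i] x) _ ▸ hxy i (mem_range.2 hi)).le⟩

/-- A separated subset of `Z` of maximal cardinality is spanning for `Z`. -/
lemma exists_isSeparatedSet_isSpanningSet (hf : Continuous f) (n : ℕ) (hε : 0 < ε) (Z : Set X) :
    ∃ E : Finset X, ↑E ⊆ Z ∧ IsSeparatedSet f n ε E ∧ IsSpanningSet f n ε Z E := by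
  classical
  obtain ⟨F, hF⟩ := exists_isSpanningSet_univ hf n (half_pos hε)
  set S := {k | ∃ E : Finset X, ↑E ⊆ Z ∧ IsSeparatedSet f n ε E ∧ #E = k}
  have hbdd : BddAbove S :=
    ⟨#F, by rintro _ ⟨E, -, hE, rfl⟩; exact hE.card_le hF⟩
  obtain ⟨E, hEZ, hE, hcard⟩ : sSup S ∈ S :=
    Nat.sSup_mem ⟨0, ∅, by simp, by simp [IsSeparatedSet], rfl⟩ hbdd
  refine ⟨E, hEZ, hE, fun y hy => by_contra fun hyE => ?_⟩
  push Not at hyE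
  have hy' : y ∉ E := fun h => (hyE y h).not_ge (dynDist_self f n y ▸ hε.le)
  have : #(insert y E) ≤ _ := le_csSup hbdd
    ⟨insert y E, by simpa [Set.insert_subset_iff] using ⟨hy, hEZ⟩, hE.insert hyE, rfl⟩
  rw [card_insert_of_notMem hy', hcard] at this
  omega

end Compact

section SepSum

variable [MetricSpace X] {f : X → X} {φ : X → ℝ} {n : ℕ} {ε : ℝ}

lemma nonempty_sepSum_set (f : X → X) (φ : X → ℝ) (n : ℕ) (ε : ℝ) :
    {r : ℝ | ∃ E : Finset X, IsSeparatedSet f n ε E ∧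
      r = ∑ x ∈ E, exp (birkhoff f φ n x)}.Nonempty :=
  ⟨0, ∅, by simp [IsSeparatedSet], by simp⟩

variable [CompactSpace X]

lemma bddAbove_sepSum (hf : Continuous f) (hφ : Continuous φ) (hε : 0 < ε) (n : ℕ) :
    BddAbove {r : ℝ | ∃ E : Finset X, IsSeparatedSet f n ε E ∧
      r = ∑ x ∈ E, exp (birkhoff f φ n x)} := by
  obtain ⟨B, hB⟩ := (isCompact_range hφ).bddAbove
  obtain ⟨F, hF⟩ := exists_isSpanningSet_univ hf n (half_pos hε)
  refine ⟨#F * exp (n * B), ?_⟩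
  rintro _ ⟨E, hE, rfl⟩
  calc ∑ x ∈ E, exp (birkhoff f φ n x) ≤ ∑ _x ∈ E, exp (n * B) :=
        sum_le_sum fun x _ => exp_le_exp.2 (birkhoff_le_mul (fun y => hB (mem_range_self y)) n x)
    _ = #E * exp (n * B) := by rw [sum_const, nsmul_eq_mul]
    _ ≤ #F * exp (n * B) :=
        mul_le_mul_of_nonneg_right (by exact_mod_cast hE.card_le hF) (exp_pos _).le

lemma sum_le_sepSum (hf : Continuous f) (hφ : Continuous φ) (hε : 0 < ε) {E : Finset X}
    (hE : IsSeparatedSet f n ε E) : ∑ x ∈ E, exp (birkhoff f φ n x) ≤ sepSum f φ n ε :=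
  le_csSup (bddAbove_sepSum hf hφ hε n) ⟨E, hE, rfl⟩

lemma sepSum_pos [Nonempty X] (hf : Continuous f) (hφ : Continuous φ) (hε : 0 < ε) (n : ℕ) :
    0 < sepSum f φ n ε := by
  obtain ⟨x⟩ := ‹Nonempty X›
  have hx : IsSeparatedSet f n ε {x} := by simp [IsSeparatedSet]
  exact (exp_pos _).trans_le (by simpa using sum_le_sepSum hf hφ hε hx)

lemma sepSum_le_exp_mul_sepSum {φ₁ φ₂ : X → ℝ} (hf : Continuous f) (hφ₂ : Continuous φ₂)
    (hε : 0 < ε) {c : ℝ} (hc : ∀ x, φ₁ x ≤ φ₂ x + c) (n : ℕ) :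
    sepSum f φ₁ n ε ≤ exp (n * c) * sepSum f φ₂ n ε := by
  refine csSup_le (nonempty_sepSum_set f φ₁ n ε) ?_
  rintro _ ⟨E, hE, rfl⟩
  calc ∑ x ∈ E, exp (birkhoff f φ₁ n x) ≤ ∑ x ∈ E, exp (n * c) * exp (birkhoff f φ₂ n x) :=
        sum_le_sum fun x _ => by
          rw [← exp_add]
          exact exp_le_exp.2 <| by
            linarith [birkhoff_le_birkhoff_add (n := n) fun i _ => hc (f^[i] x)]
    _ = exp (n * c) * ∑ x ∈ E, exp (birkhoff f φ₂ n x) := (mul_sum _ _ _).symm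
    _ ≤ exp (n * c) * sepSum f φ₂ n ε := by gcongr; exact sum_le_sepSum hf hφ₂ hε hE

end SepSum

section Pressure

variable [MetricSpace X] {f : X → X} {φ : X → ℝ} {ε : ℝ}

lemma limsup_le_topPressure (f : X → X) (φ : X → ℝ) (hε : 0 < ε) :
    limsup (fun n : ℕ => (((n : ℝ)⁻¹ * log (sepSum f φ n ε) : ℝ) : EReal)) atTop
      ≤ topPressure f φ :=
  le_iSup₂ (f := fun ε (_ : 0 < ε) =>
    limsup (fun n : ℕ => (((n : ℝ)⁻¹ * log (sepSum f φ n ε) : ℝ) : EReal)) atTop) ε hε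

/-- `sepSum ≤ exp (log sepSum)` holds even where `log` takes its junk value, so no positivity
of `sepSum` is needed here. -/
lemma eventually_sepSum_le_exp {z : ℝ} (hε : 0 < ε) (hz : topPressure f φ < z) :
    ∀ᶠ n : ℕ in atTop, sepSum f φ n ε ≤ exp (n * z) := by
  filter_upwards [eventually_lt_of_limsup_lt ((limsup_le_topPressure f φ hε).trans_lt hz),
    eventually_gt_atTop 0] with n hn hn0
  rw [EReal.coe_lt_coe_iff, inv_mul_lt_iff₀ (by exact_mod_cast hn0)] at hn
  exact (le_exp_log _).trans (exp_le_exp.2 hn.le)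

lemma frequently_exp_lt_sepSum [CompactSpace X] [Nonempty X] (hf : Continuous f)
    (hφ : Continuous φ) {z : ℝ} (hz : (z : EReal) < topPressure f φ) :
    ∃ ε > 0, ∃ᶠ n : ℕ in atTop, exp (n * z) < sepSum f φ n ε := by
  obtain ⟨ε, hz⟩ := lt_iSup_iff.1 hz
  obtain ⟨hε, hz⟩ := lt_iSup_iff.1 hz
  refine ⟨ε, hε, ((frequently_lt_of_lt_limsup (by isBoundedDefault) hz).and_eventually
    (eventually_gt_atTop 0)).mono fun n ⟨hn, hn0⟩ => ?_⟩
  rw [EReal.coe_lt_coe_iff, lt_inv_mul_iff₀ (by exact_mod_cast hn0)] at hn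
  exact (lt_log_iff_exp_lt (sepSum_pos hf hφ hε n)).1 hn

lemma topPressure_le_add [CompactSpace X] [Nonempty X] {φ₁ φ₂ : X → ℝ} (hf : Continuous f)
    (hφ₁ : Continuous φ₁) (hφ₂ : Continuous φ₂) {c : ℝ} (hc : ∀ x, φ₁ x ≤ φ₂ x + c) :
    topPressure f φ₁ ≤ topPressure f φ₂ + c := by
  refine iSup₂_le fun ε hε => ?_
  have hle : (fun n : ℕ => (((n : ℝ)⁻¹ * log (sepSum f φ₁ n ε) : ℝ) : EReal))
      ≤ᶠ[atTop] (fun n : ℕ => (((n : ℝ)⁻¹ * log (sepSum f φ₂ n ε) : ℝ) : EReal)) +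
        fun _ => (c : EReal) := by
    filter_upwards [eventually_gt_atTop 0] with n hn
    have hn : (0 : ℝ) < n := by exact_mod_cast hn
    rw [Pi.add_apply, ← EReal.coe_add, EReal.coe_le_coe_iff, inv_mul_le_iff₀ hn, mul_add,
      mul_inv_cancel_left₀ hn.ne', ← log_exp (n * c),
      ← log_mul (sepSum_pos hf hφ₂ hε n).ne' (exp_ne_zero _)]
    exact log_le_log (sepSum_pos hf hφ₁ hε n)
      ((sepSum_le_exp_mul_sepSum hf hφ₂ hε hc n).trans_eq (mul_comm _ _))
  calc limsup (fun n : ℕ => (((n : ℝ)⁻¹ * log (sepSum f φ₁ n ε) : ℝ) : EReal)) atTop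
      ≤ limsup ((fun n : ℕ => (((n : ℝ)⁻¹ * log (sepSum f φ₂ n ε) : ℝ) : EReal)) +
          fun _ => (c : EReal)) atTop := limsup_le_limsup hle
    _ ≤ limsup (fun n : ℕ => (((n : ℝ)⁻¹ * log (sepSum f φ₂ n ε) : ℝ) : EReal)) atTop + c := by
        refine (EReal.limsup_add_le ?_ ?_).trans_eq (by rw [limsup_const]) <;>
          simp [limsup_const]
    _ ≤ topPressure f φ₂ + c := by gcongr; exact limsup_le_topPressure f φ₂ hε

lemma pressure_le_sub_of_le_mul [CompactSpace X] [Nonempty X] {ψ : X → ℝ} (hf : Continuous f)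
    (hφ : Continuous φ) (hψ : Continuous ψ) {P : ℝ → ℝ}
    (hP : ∀ β, topPressure f (fun x => φ x - β * ψ x) = P β) {β β' c : ℝ}
    (hc : ∀ x, c ≤ (β' - β) * ψ x) : P β' ≤ P β - c := by
  have := topPressure_le_add (φ₁ := fun x => φ x - β' * ψ x) (φ₂ := fun x => φ x - β * ψ x)
    (c := -c) hf (hφ.sub (continuous_const.mul hψ)) (hφ.sub (continuous_const.mul hψ))
    fun x => by linarith [hc x]
  rw [hP, hP, ← EReal.coe_add, EReal.coe_le_coe_iff] at this
  linarith

end Pressure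

section RealFunction

variable {g : ℝ → ℝ} {m M : ℝ}

lemma strictAnti_of_le_sub_mul (hm : 0 < m)
    (h : ∀ β β', β ≤ β' → g β' ≤ g β - (β' - β) * m) : StrictAnti g :=
  fun β β' hlt => by nlinarith [h β β' hlt.le]

lemma exists_eq_zero_of_le_sub_mul (hg : Continuous g) (hm : 0 < m)
    (h : ∀ β β', β ≤ β' → g β' ≤ g β - (β' - β) * m) : ∃ c, g c = 0 := by
  have hbot : Tendsto g atBot atTop :=
    tendsto_atTop_mono' _ ((eventually_le_atBot 0).mono fun β hβ => by linarith [h β 0 hβ])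
      (tendsto_atTop_add_const_left _ (g 0) (tendsto_neg_atBot_atTop.atTop_mul_const hm))
  have htop : Tendsto g atTop atBot :=
    tendsto_atBot_mono'
      _ ((eventually_ge_atTop 0).mono fun β hβ => by simp only [id]; linarith [h 0 β hβ])
      (tendsto_atBot_add_const_left _ (g 0)
        (tendsto_id.atTop_mul_const_of_neg (neg_neg_of_pos hm)))
  exact hg.surjective' hbot htop 0

lemma lipschitzWith_of_antitone_of_le_add_mul (hanti : Antitone g) (hM : 0 ≤ M)
    (h : ∀ β β', β ≤ β' → g β ≤ g β' + (β' - β) * M) : LipschitzWith (Real.toNNReal M) g := by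
  refine LipschitzWith.of_le_add_mul _ fun β β' => ?_
  rw [coe_toNNReal M hM, Real.dist_eq]
  rcases le_total β β' with hle | hle
  · rw [abs_of_nonpos (sub_nonpos.2 hle)]
    linarith [h β β' hle]
  · linarith [hanti hle, mul_nonneg hM (abs_nonneg (β - β'))]

end RealFunction

section Return

variable {f : X → X} {ψ : X → ℝ} {m M T : ℝ} {n : ℕ}

lemma mul_le_of_mem_STset (hm : ∀ x, m ≤ ψ x) (hn : n ∈ STset f ψ T) : n * m ≤ T :=
  let ⟨x, hx, _⟩ := hn
  (mul_le_birkhoff hm n x).trans hx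

lemma lt_mul_of_mem_STset (hM : ∀ x, ψ x ≤ M) (hn : n ∈ STset f ψ T) : T < (n + 1) * M :=
  let ⟨x, _, hx⟩ := hn
  hx.trans_le (by exact_mod_cast birkhoff_le_mul hM (n + 1) x)

lemma STset_subset_range (hm0 : 0 < m) (hm : ∀ x, m ≤ ψ x) :
    STset f ψ T ⊆ ↑(Finset.range (⌊T / m⌋₊ + 1)) := fun _ hn =>
  mem_range.2 <| Nat.lt_succ_of_le <| Nat.le_floor <|
    (le_div_iff₀ hm0).2 (mul_le_of_mem_STset hm hn)

lemma tsum_indicator_STset (hm0 : 0 < m) (hm : ∀ x, m ≤ ψ x) (h : ℕ → ℝ) :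
    ∑' n, (STset f ψ T).indicator h n
      = ∑ n ∈ Finset.range (⌊T / m⌋₊ + 1), (STset f ψ T).indicator h n :=
  tsum_eq_sum fun _ hn => indicator_of_notMem (fun h' => hn (STset_subset_range hm0 hm h')) h

/-- Along any orbit the Birkhoff sums of `ψ ≥ m > 0` increase from `0` to `∞`, so some
`S_n ψ (x) ≤ T < S_{n+1} ψ (x)`. -/
lemma STset_nonempty [Nonempty X] (hm0 : 0 < m) (hm : ∀ x, m ≤ ψ x) (hT : 0 ≤ T) :
    (STset f ψ T).Nonempty := by
  classical
  obtain ⟨x⟩ := ‹Nonempty X›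
  have hex : ∃ n : ℕ, T < birkhoff f ψ (n + 1) x := by
    obtain ⟨n, hn⟩ := Archimedean.arch T hm0
    refine ⟨n, (nsmul_eq_mul n m ▸ hn).trans_lt ((mul_le_birkhoff (f := f) hm n x).trans_lt ?_)⟩
    linarith [birkhoff_succ f ψ n x, hm0.trans_le (hm (f^[n] x))]
  refine ⟨Nat.find hex, x, ?_, Nat.find_spec hex⟩
  rcases Nat.eq_zero_or_eq_succ_pred (Nat.find hex) with h | h
  · rwa [h, birkhoff_zero]
  · rw [h]
    exact not_lt.1 (Nat.find_min hex (h ▸ Nat.pred_lt_self (by omega)))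

lemma mem_Xset_natCeil (hm0 : 0 < m) (hm : ∀ x, m ≤ ψ x) (n : ℕ) (x : X) :
    x ∈ Xset f ψ (⌈birkhoff f ψ n x / m⌉₊ * m) n := by
  have hS : 0 ≤ birkhoff f ψ n x / m :=
    div_nonneg ((mul_nonneg n.cast_nonneg hm0.le).trans (mul_le_birkhoff hm n x)) hm0.le
  refine ⟨(div_le_iff₀ hm0).1 (Nat.le_ceil _), ?_⟩
  have := (lt_div_iff₀ hm0).1 (sub_lt_iff_lt_add.2 (Nat.ceil_lt_add_one hS))
  rw [birkhoff_succ]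
  linarith [hm (f^[n] x), div_mul_cancel₀ (birkhoff f ψ n x) hm0.ne']

lemma sum_exp_birkhoff_le_of_subset_Xset (β : ℝ) (hM : ∀ x, ψ x ≤ M) {φ : X → ℝ}
    {E : Finset X} (hE : ↑E ⊆ Xset f ψ T n) :
    ∑ x ∈ E, exp (birkhoff f φ n x)
      ≤ exp (β * T + |β| * M) * ∑ x ∈ E, exp (birkhoff f (fun y => φ y - β * ψ y) n x) := by
  rw [mul_sum]
  refine sum_le_sum fun x hx => ?_
  rw [← exp_add]
  exact exp_le_exp.2 <| by
    linarith [(abs_le.1 (abs_birkhoff_sub_birkhoff_sub_mul_le φ β hM (hE hx))).2]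

lemma exp_mul_sum_le_of_subset_Xset (β : ℝ) (hM : ∀ x, ψ x ≤ M) {φ : X → ℝ}
    {E : Finset X} (hE : ↑E ⊆ Xset f ψ T n) :
    exp (β * T - |β| * M) * ∑ x ∈ E, exp (birkhoff f (fun y => φ y - β * ψ y) n x)
      ≤ ∑ x ∈ E, exp (birkhoff f φ n x) := by
  rw [mul_sum]
  refine sum_le_sum fun x hx => ?_
  rw [← exp_add]
  exact exp_le_exp.2 <| by
    linarith [(abs_le.1 (abs_birkhoff_sub_birkhoff_sub_mul_le φ β hM (hE hx))).1]

/-- Pigeonhole over the grid `T ∈ m ℕ`: each `x` lies in `X_n` for `T = ⌈S_n ψ (x) / m⌉ m`, and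
there are at most `⌈n M / m⌉ + 1` such values of `T`. -/
lemma exists_subset_Xset_lt_sum (hm0 : 0 < m) (hm : ∀ x, m ≤ ψ x) (hM : ∀ x, ψ x ≤ M) (n : ℕ)
    (E : Finset X) (w : X → ℝ) {A : ℝ} (hA : A < ∑ x ∈ E, w x) :
    ∃ T : ℝ, ∃ E' ⊆ E, ↑E' ⊆ Xset f ψ T n ∧ A / (⌈n * M / m⌉₊ + 1) < ∑ x ∈ E', w x := by
  classical
  obtain ⟨j, -, hj⟩ := exists_lt_sum_fiber_of_maps_to_of_nsmul_lt_sum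
    (f := fun x => ⌈birkhoff f ψ n x / m⌉₊) (t := Finset.range (⌈n * M / m⌉₊ + 1))
    (b := A / (⌈n * M / m⌉₊ + 1))
    (fun x _ => mem_range.2 <| Nat.lt_succ_of_le <| Nat.ceil_mono <|
      div_le_div_of_nonneg_right (birkhoff_le_mul hM n x) hm0.le)
    (by rwa [card_range, nsmul_eq_mul, Nat.cast_add_one, mul_div_cancel₀ _ (by positivity)])
  refine ⟨j * m, _, filter_subset _ E, fun x hx => ?_, hj⟩
  obtain ⟨-, rfl⟩ := mem_filter.1 hx
  exact mem_Xset_natCeil hm0 hm n x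

end Return

section Qspan

variable [MetricSpace X] {f : X → X} {φ ψ : X → ℝ} {m T ε : ℝ} {n : ℕ}

lemma limsup_le_inducedPressure (f : X → X) (φ ψ : X → ℝ) (hε : 0 < ε) :
    limsup (fun T : ℝ => ((T⁻¹ * log (Qspan f φ ψ T ε) : ℝ) : EReal)) atTop
      ≤ inducedPressure f φ ψ :=
  le_iSup₂ (f := fun ε (_ : 0 < ε) =>
    limsup (fun T : ℝ => ((T⁻¹ * log (Qspan f φ ψ T ε) : ℝ) : EReal)) atTop) ε hε

lemma Qspan_le_tsum {F : ℕ → Finset X}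
    (hF : ∀ n ∈ STset f ψ T, IsSpanningSet f n ε (Xset f ψ T n) (F n)) :
    Qspan f φ ψ T ε
      ≤ ∑' n, (STset f ψ T).indicator (fun n => ∑ x ∈ F n, exp (birkhoff f φ n x)) n := by
  refine csInf_le ⟨0, ?_⟩ ⟨F, hF, rfl⟩
  rintro _ ⟨F, -, rfl⟩
  exact tsum_nonneg fun n => indicator_nonneg (fun n _ => sum_nonneg fun x _ => (exp_pos _).le) n

variable [CompactSpace X]

lemma le_Qspan (hf : Continuous f) (hε : 0 < ε) (hm0 : 0 < m) (hm : ∀ x, m ≤ ψ x)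
    (hn : n ∈ STset f ψ T) {b : ℝ}
    (hb : ∀ F : Finset X, IsSpanningSet f n ε (Xset f ψ T n) F →
      b ≤ ∑ x ∈ F, exp (birkhoff f φ n x)) :
    b ≤ Qspan f φ ψ T ε := by
  choose F hF using fun k => exists_isSpanningSet_univ hf k hε
  refine le_csInf ⟨_, F, fun k _ y _ => hF k y (mem_univ y), rfl⟩ ?_
  rintro _ ⟨F, hF, rfl⟩
  rw [tsum_indicator_STset hm0 hm]
  calc b ≤ (STset f ψ T).indicator (fun n => ∑ x ∈ F n, exp (birkhoff f φ n x)) n := by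
        rw [indicator_of_mem hn]; exact hb _ (hF n hn)
    _ ≤ _ := single_le_sum (f := (STset f ψ T).indicator fun n => ∑ x ∈ F n, exp (birkhoff f φ n x))
        (fun k _ => indicator_nonneg (fun k _ => sum_nonneg fun x _ => (exp_pos _).le) k)
        (STset_subset_range hm0 hm hn)

lemma Qspan_pos [Nonempty X] (hf : Continuous f) (hφ : Continuous φ) (hε : 0 < ε)
    (hm0 : 0 < m) (hm : ∀ x, m ≤ ψ x) (hT : 0 ≤ T) : 0 < Qspan f φ ψ T ε := by
  obtain ⟨n, x, hx⟩ := STset_nonempty (f := f) hm0 hm hT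
  obtain ⟨b, hb⟩ := (isCompact_range hφ).bddBelow
  refine (exp_pos (n * b)).trans_le (le_Qspan hf hε hm0 hm ⟨x, hx⟩ fun F hF => ?_)
  obtain ⟨y, hy, -⟩ := hF x hx
  exact (exp_le_exp.2 (mul_le_birkhoff (fun z => hb (mem_range_self z)) n y)).trans
    (single_le_sum (fun z _ => (exp_pos _).le) hy)

end Qspan

lemma tendsto_log_mul_add_div_atTop {c : ℝ} (hc : 0 < c) (d : ℝ) :
    Tendsto (fun x => log (c * x + d) / x) atTop (𝓝 0) := by
  have hlin : Tendsto (fun x => c * x + d) atTop atTop :=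
    tendsto_atTop_add_const_right _ d (tendsto_id.const_mul_atTop hc)
  refine (isLittleO_log_id_atTop.comp_tendsto hlin).trans_isBigO ?_ |>.tendsto_div_nhds_zero
  exact ((Asymptotics.isBigO_refl _ _).const_mul_left c).add
    (Asymptotics.isLittleO_const_id_atTop d).isBigO

lemma eventually_mul_add_le_exp {a c : ℝ} (ha : 0 < a) (hc : 0 < c) (b d : ℝ) :
    ∀ᶠ x in atTop, c * x + d ≤ exp (a * x - b) := by
  have h := ((tendsto_log_mul_add_div_atTop hc d).add
    (tendsto_const_nhds.div_atTop tendsto_id : Tendsto (fun x => b / x) atTop (𝓝 0))).eventually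
    (gt_mem_nhds (by simpa using ha))
  filter_upwards [h, eventually_gt_atTop 0] with x hx hx0
  rw [← add_div, div_lt_iff₀ hx0] at hx
  exact (le_exp_log _).trans (exp_le_exp.2 (by linarith))

section Estimates

variable [MetricSpace X] [CompactSpace X] {f : X → X} {φ ψ : X → ℝ} {m M T ε β : ℝ} {n : ℕ}

lemma Qspan_le_of_sepSum_le (hf : Continuous f) (hφ : Continuous φ) (hψ : Continuous ψ)
    (hε : 0 < ε) (hm0 : 0 < m) (hm : ∀ x, m ≤ ψ x) (hM : ∀ x, ψ x ≤ M) (hT : 0 ≤ T) {B : ℝ}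
    (hB0 : 0 ≤ B) (hB : ∀ n ∈ STset f ψ T, sepSum f (fun x => φ x - β * ψ x) n ε ≤ B) :
    Qspan f φ ψ T ε ≤ (m⁻¹ * T + 1) * (exp (β * T + |β| * M) * B) := by
  choose F hFX hFsep hFspan using
    fun n => exists_isSeparatedSet_isSpanningSet hf n hε (Xset f ψ T n)
  have hterm : ∀ n, (STset f ψ T).indicator (fun n => ∑ x ∈ F n, exp (birkhoff f φ n x)) n
      ≤ exp (β * T + |β| * M) * B := by
    intro n
    by_cases hn : n ∈ STset f ψ T
    · rw [indicator_of_mem hn]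
      refine (sum_exp_birkhoff_le_of_subset_Xset β hM (hFX n)).trans ?_
      gcongr
      exact (sum_le_sepSum hf (hφ.sub (continuous_const.mul hψ)) hε (hFsep n)).trans (hB n hn)
    · rw [indicator_of_notMem hn]
      positivity
  calc Qspan f φ ψ T ε
      ≤ ∑' n, (STset f ψ T).indicator (fun n => ∑ x ∈ F n, exp (birkhoff f φ n x)) n :=
        Qspan_le_tsum fun n _ => hFspan n
    _ = ∑ n ∈ Finset.range (⌊T / m⌋₊ + 1),
          (STset f ψ T).indicator (fun n => ∑ x ∈ F n, exp (birkhoff f φ n x)) n :=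
        tsum_indicator_STset hm0 hm _
    _ ≤ (⌊T / m⌋₊ + 1) * (exp (β * T + |β| * M) * B) := by
        simpa using sum_le_card_nsmul (Finset.range (⌊T / m⌋₊ + 1)) _ _ fun n _ => hterm n
    _ ≤ (m⁻¹ * T + 1) * (exp (β * T + |β| * M) * B) := by
        gcongr
        exact (Nat.floor_le (by positivity)).trans_eq (div_eq_inv_mul T m)

/-- With `P(φ - βψ) < z < 0`, every `n ∈ S_T` has `n > T / M - 1`, so the separated sums at
time `n` are at most `exp ((T / M - 1) z)`, which beats the polynomial number of such `n`. -/
lemma eventually_Qspan_le_exp [Nonempty X] (hf : Continuous f) (hφ : Continuous φ)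
    (hψ : Continuous ψ) (hε : 0 < ε) (hm0 : 0 < m) (hm : ∀ x, m ≤ ψ x) (hM : ∀ x, ψ x ≤ M)
    (hβ : topPressure f (fun x => φ x - β * ψ x) < 0) :
    ∀ᶠ T in atTop, Qspan f φ ψ T ε ≤ exp (β * T) := by
  obtain ⟨z, hPz, hz⟩ := EReal.exists_between_coe_real hβ
  have hz : z < 0 := by exact_mod_cast hz
  obtain ⟨x₀⟩ := ‹Nonempty X›
  have hM0 : 0 < M := hm0.trans_le ((hm x₀).trans (hM x₀))
  obtain ⟨N, hN⟩ := eventually_atTop.1 (eventually_sepSum_le_exp hε hPz)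
  filter_upwards [eventually_mul_add_le_exp (div_pos (neg_pos.2 hz) hM0) (inv_pos.2 hm0)
    (|β| * M - z) 1, eventually_ge_atTop ((N + 1) * M), eventually_ge_atTop 0] with T hTexp hTN hT0
  have hB : ∀ n ∈ STset f ψ T,
      sepSum f (fun x => φ x - β * ψ x) n ε ≤ exp ((T / M - 1) * z) := by
    intro n hn
    have hTn := lt_mul_of_mem_STset hM hn
    have hNn : N + 1 < n + 1 := by exact_mod_cast lt_of_mul_lt_mul_right (hTN.trans_lt hTn) hM0.le
    refine (hN n (by omega)).trans (exp_le_exp.2 (mul_le_mul_of_nonpos_right ?_ hz.le))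
    rw [div_sub_one hM0.ne', div_le_iff₀ hM0]
    linarith
  calc Qspan f φ ψ T ε ≤ (m⁻¹ * T + 1) * (exp (β * T + |β| * M) * exp ((T / M - 1) * z)) :=
        Qspan_le_of_sepSum_le hf hφ hψ hε hm0 hm hM hT0 (exp_pos _).le hB
    _ ≤ exp (-z / M * T - (|β| * M - z)) * (exp (β * T + |β| * M) * exp ((T / M - 1) * z)) := by
        gcongr
    _ = exp (β * T) := by
        simp only [← exp_add]
        congr 1
        field_simp
        ring

lemma inducedPressure_le_of_topPressure_neg [Nonempty X] (hf : Continuous f) (hφ : Continuous φ)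
    (hψ : Continuous ψ) (hm0 : 0 < m) (hm : ∀ x, m ≤ ψ x) (hM : ∀ x, ψ x ≤ M)
    (hβ : topPressure f (fun x => φ x - β * ψ x) < 0) : inducedPressure f φ ψ ≤ β := by
  refine iSup₂_le fun ε hε => limsup_le_of_le (by isBoundedDefault) ?_
  filter_upwards [eventually_Qspan_le_exp hf hφ hψ hε hm0 hm hM hβ, eventually_gt_atTop 0]
    with T hT hT0
  rw [EReal.coe_le_coe_iff, inv_mul_le_iff₀ hT0, mul_comm]
  exact (log_le_iff_le_exp (Qspan_pos hf hφ hε hm0 hm hT0.le)).2 hT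

/-- Points of `E` are shadowed, within `ε` along `n` steps, by distinct points of any spanning
set of `X_n`, and the shadow changes `S_n φ` by at most `n η`. -/
lemma exp_neg_mul_sum_le_Qspan (hf : Continuous f) (hε : 0 < ε) (hm0 : 0 < m)
    (hm : ∀ x, m ≤ ψ x) {ε₁ η : ℝ} (h2ε : 2 * ε ≤ ε₁)
    (hη : ∀ a b, dist a b ≤ ε → |φ a - φ b| ≤ η) {E : Finset X} (hE : IsSeparatedSet f n ε₁ E)
    (hEX : ↑E ⊆ Xset f ψ T n) (hn : n ∈ STset f ψ T) :
    exp (-(n * η)) * ∑ x ∈ E, exp (birkhoff f φ n x) ≤ Qspan f φ ψ T ε := by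
  classical
  refine le_Qspan hf hε hm0 hm hn fun F hF => ?_
  obtain ⟨σ, hσ, hinj⟩ := hE.exists_injOn hEX hF h2ε
  calc exp (-(n * η)) * ∑ x ∈ E, exp (birkhoff f φ n x)
      = ∑ x ∈ E, exp (birkhoff f φ n x - n * η) := by
        simp only [mul_sum, ← exp_add, neg_add_eq_sub]
    _ ≤ ∑ x ∈ E, exp (birkhoff f φ n (σ x)) :=
        sum_le_sum fun x hx => exp_le_exp.2 <| sub_le_iff_le_add.2 <|
          birkhoff_le_birkhoff_add fun i hi => by
            linarith [(abs_le.1 (hη _ _ ((dist_iterate_le_dynDist hi _ _).trans (hσ x hx).2))).1]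
    _ = ∑ y ∈ E.image σ, exp (birkhoff f φ n y) := by rw [sum_image hinj]
    _ ≤ ∑ y ∈ F, exp (birkhoff f φ n y) :=
        sum_le_sum_of_subset_of_nonneg (image_subset_iff.2 fun x hx => (hσ x hx).1)
          fun _ _ _ => (exp_pos _).le

lemma exists_exp_mul_le_Qspan (hf : Continuous f) (hε : 0 < ε) (hm0 : 0 < m)
    (hm : ∀ x, m ≤ ψ x) (hM : ∀ x, ψ x ≤ M) {ε₁ q : ℝ} (h2ε : 2 * ε ≤ ε₁)
    (hη : ∀ a b, dist a b ≤ ε → |φ a - φ b| ≤ q / 2)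
    (hsep : exp (n * q) < sepSum f (fun x => φ x - β * ψ x) n ε₁)
    (hgrowth : m⁻¹ * M * n + 2 ≤ exp (q / 2 * n - |β| * M)) :
    ∃ T ≥ n * m, exp (β * T) ≤ Qspan f φ ψ T ε := by
  obtain ⟨_, ⟨E, hE, rfl⟩, hEsum⟩ :=
    exists_lt_of_lt_csSup (nonempty_sepSum_set _ _ n ε₁) hsep
  obtain ⟨T, E', hE'E, hE'X, hE'sum⟩ := exists_subset_Xset_lt_sum (f := f) hm0 hm hM n E _ hEsum
  obtain ⟨x, hx⟩ : E'.Nonempty := nonempty_of_sum_ne_zero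
    ((div_pos (exp_pos _) (by positivity)).trans hE'sum).ne'
  refine ⟨T, (mul_le_birkhoff hm n x).trans (hE'X hx).1, ?_⟩
  have hK : (⌈n * M / m⌉₊ + 1 : ℝ) ≤ exp (q / 2 * n - |β| * M) := by
    have hM0 : 0 ≤ M := (hm0.le.trans (hm x)).trans (hM x)
    have := Nat.ceil_lt_add_one (by positivity : (0 : ℝ) ≤ n * M / m)
    rw [show n * M / m = m⁻¹ * M * n by ring] at this ⊢
    linarith
  calc exp (β * T) = exp (-(n * (q / 2))) *
        (exp (β * T - |β| * M) * (exp (n * q) / exp (q / 2 * n - |β| * M))) := by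
        simp only [← exp_sub, ← exp_add]
        ring_nf
    _ ≤ exp (-(n * (q / 2))) *
        (exp (β * T - |β| * M) * (exp (n * q) / (⌈n * M / m⌉₊ + 1))) := by gcongr
    _ ≤ exp (-(n * (q / 2))) * (exp (β * T - |β| * M) *
        ∑ x ∈ E', exp (birkhoff f (fun y => φ y - β * ψ y) n x)) := by gcongr
    _ ≤ exp (-(n * (q / 2))) * ∑ x ∈ E', exp (birkhoff f φ n x) := by
        gcongr
        exact exp_mul_sum_le_of_subset_Xset β hM hE'X
    _ ≤ Qspan f φ ψ T ε :=
        exp_neg_mul_sum_le_Qspan hf hε hm0 hm h2ε hη (hE.mono hE'E) hE'X ⟨x, hE'X hx⟩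

lemma le_inducedPressure_of_topPressure_pos [Nonempty X] (hf : Continuous f) (hφ : Continuous φ)
    (hψ : Continuous ψ) (hm0 : 0 < m) (hm : ∀ x, m ≤ ψ x) (hM : ∀ x, ψ x ≤ M)
    (hβ : 0 < topPressure f (fun x => φ x - β * ψ x)) : (β : EReal) ≤ inducedPressure f φ ψ := by
  obtain ⟨x₀⟩ := ‹Nonempty X›
  have hM0 : 0 < M := hm0.trans_le ((hm x₀).trans (hM x₀))
  obtain ⟨q, hq0, hqP⟩ := EReal.exists_between_coe_real hβ
  have hq0 : 0 < q := by exact_mod_cast hq0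
  obtain ⟨ε₁, hε₁, hfreq⟩ := frequently_exp_lt_sepSum hf (hφ.sub (continuous_const.mul hψ)) hqP
  obtain ⟨δ, hδ, hφδ⟩ := Metric.uniformContinuous_iff.1
    (CompactSpace.uniformContinuous_of_continuous hφ) (q / 2) (half_pos hq0)
  set ε := min (ε₁ / 2) (δ / 2)
  have hε : 0 < ε := by positivity
  have hη : ∀ a b, dist a b ≤ ε → |φ a - φ b| ≤ q / 2 := fun a b hab =>
    (hφδ (hab.trans_lt ((min_le_right _ _).trans_lt (half_lt_self hδ)))).le
  have hgrowth : ∀ᶠ n : ℕ in atTop, m⁻¹ * M * n + 2 ≤ exp (q / 2 * n - |β| * M) :=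
    tendsto_natCast_atTop_atTop.eventually
      (eventually_mul_add_le_exp (half_pos hq0) (mul_pos (inv_pos.2 hm0) hM0) (|β| * M) 2)
  have hQ : ∃ᶠ T in atTop, exp (β * T) ≤ Qspan f φ ψ T ε := by
    refine frequently_atTop.2 fun T₀ => ?_
    obtain ⟨n, hn, hgn, hnT₀⟩ :=
      (hfreq.and_eventually (hgrowth.and (eventually_ge_atTop ⌈T₀ / m⌉₊))).exists
    obtain ⟨T, hT, hQ⟩ :=
      exists_exp_mul_le_Qspan hf hε hm0 hm hM (by linarith [min_le_left (ε₁ / 2) (δ / 2)]) hη hn hgn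
    refine ⟨T, le_trans ?_ hT, hQ⟩
    exact (div_le_iff₀ hm0).1 ((Nat.le_ceil _).trans (by exact_mod_cast hnT₀))
  refine le_trans (le_limsup_of_frequently_le ?_ (by isBoundedDefault))
    (limsup_le_inducedPressure f φ ψ hε)
  refine (hQ.and_eventually (eventually_gt_atTop 0)).mono fun T ⟨hT, hT0⟩ => ?_
  rw [EReal.coe_le_coe_iff, le_inv_mul_iff₀ hT0, mul_comm]
  exact (le_log_iff_exp_le ((exp_pos _).trans_le hT)).2 hT

lemma inducedPressure_eq_of_strictAnti [Nonempty X] (hf : Continuous f) (hφ : Continuous φ)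
    (hψ : Continuous ψ) (hm0 : 0 < m) (hm : ∀ x, m ≤ ψ x) (hM : ∀ x, ψ x ≤ M) {P : ℝ → ℝ}
    (hP : ∀ β, topPressure f (fun x => φ x - β * ψ x) = P β) (hanti : StrictAnti P) {c : ℝ}
    (hc : P c = 0) : inducedPressure f φ ψ = c := by
  refine le_antisymm (EReal.le_of_forall_lt_iff_le.1 fun b hb => ?_)
    (EReal.ge_of_forall_gt_iff_ge.1 fun b hb => ?_)
  · refine inducedPressure_le_of_topPressure_neg hf hφ hψ hm0 hm hM ?_
    rw [hP]
    exact_mod_cast (hc ▸ hanti (EReal.coe_lt_coe_iff.1 hb) : P b < 0)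
  · refine le_inducedPressure_of_topPressure_pos hf hφ hψ hm0 hm hM ?_
    rw [hP]
    exact_mod_cast (hc ▸ hanti (EReal.coe_lt_coe_iff.1 hb) : 0 < P b)

end Estimates

/-- if `P(φ-βψ)` is real for all `β`, then `P_ψ(φ)` is the unique root of
`β ↦ P(φ - βψ)`. -/
theorem stmt10 [MetricSpace X] [CompactSpace X] [Nonempty X]
    (f : X → X) (φ ψ : X → ℝ) (hf : Continuous f) (hφ : Continuous φ) (hψ : Continuous ψ)
    (hpos : ∀ x, 0 < ψ x)
    (hfin : ∀ β : ℝ, ∃ r : ℝ, topPressure f (fun x => φ x - β * ψ x) = (r : EReal)) :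
    topPressure f (fun x => φ x - (inducedPressure f φ ψ).toReal * ψ x) = 0 ∧
    ∀ β : ℝ, topPressure f (fun x => φ x - β * ψ x) = 0 →
      (β : EReal) = inducedPressure f φ ψ := by
  obtain ⟨x₀, -, hx₀⟩ := isCompact_univ.exists_isMinOn univ_nonempty hψ.continuousOn
  obtain ⟨M, hMψ⟩ := (isCompact_range hψ).bddAbove
  have hm : ∀ x, ψ x₀ ≤ ψ x := fun x => hx₀ (mem_univ x)
  have hM : ∀ x, ψ x ≤ M := fun x => hMψ (mem_range_self x)
  choose P hP using hfin
  have hdecay : ∀ β β', β ≤ β' → P β' ≤ P β - (β' - β) * ψ x₀ := fun β β' h =>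
    pressure_le_sub_of_le_mul hf hφ hψ hP fun x =>
      mul_le_mul_of_nonneg_left (hm x) (sub_nonneg.2 h)
  have hgrowth : ∀ β β', β ≤ β' → P β ≤ P β' + (β' - β) * M := fun β β' h =>
    (pressure_le_sub_of_le_mul hf hφ hψ hP fun x =>
      mul_le_mul_of_nonpos_left (hM x) (sub_nonpos.2 h)).trans_eq (by ring)
  have hanti := strictAnti_of_le_sub_mul (hpos x₀) hdecay
  obtain ⟨c, hc⟩ := exists_eq_zero_of_le_sub_mul (lipschitzWith_of_antitone_of_le_add_mul
    hanti.antitone ((hpos x₀).le.trans ((hm x₀).trans (hM x₀))) hgrowth).continuous (hpos x₀) hdecay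
  have hI := inducedPressure_eq_of_strictAnti hf hφ hψ (hpos x₀) hm hM hP hanti hc
  refine ⟨by rw [hI, EReal.toReal_coe, hP, hc, EReal.coe_zero], fun β hβ => ?_⟩
  rw [hI, hanti.injective ((EReal.coe_eq_coe_iff.1 ((hP β).symm.trans hβ)).trans hc.symm)]
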